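/- If 0 < M < M_c, then ℱ[h] > 0 for every h ∈ 𝒴_M; in particular the infimum μ_M = 0 of ℱ over 𝒴_M is not attained. -/

import Mathlib

open MeasureTheory Real Metric Set

noncomputable section

abbrev E (d : ℕ) := EuclideanSpace ℝ (Fin d)

def mexp (d : ℕ) : ℝ := 2 * ((d : ℝ) - 1) / d

def sigmaD (d : ℕ) : ℝ := 2 * Real.pi ^ ((d : ℝ) / 2) / Real.Gamma ((d : ℝ) / 2)

def cD (d : ℕ) : ℝ := 1 / (((d : ℝ) - 2) * sigmaD d)

def Wfun (d : ℕ) (h : E d → ℝ) : ℝ :=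
  ∫ x : E d, ∫ y : E d, h x * h y * ‖x - y‖ ^ (-((d : ℝ) - 2))

def nrm (d : ℕ) (p : ℝ) (h : E d → ℝ) : ℝ :=
  (eLpNorm h (ENNReal.ofReal p) volume).toReal

def InL1Lm (d : ℕ) (h : E d → ℝ) : Prop :=
  MemLp h 1 volume ∧ MemLp h (ENNReal.ofReal (mexp d)) volume ∧ 0 ≤ᵐ[volume] h

def Ffun (d : ℕ) (h : E d → ℝ) : ℝ :=
  (1 / (mexp d - 1)) * (∫ x : E d, h x ^ mexp d) - (cD d / 2) * Wfun d h

def Cstar (d : ℕ) : ℝ :=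
  sSup { r : ℝ | ∃ h : E d → ℝ, InL1Lm d h ∧ ¬ (h =ᵐ[volume] 0) ∧
    r = Wfun d h / (nrm d 1 h ^ (2 / (d : ℝ)) * nrm d (mexp d) h ^ mexp d) }

def Mc (d : ℕ) : ℝ := (2 / ((mexp d - 1) * Cstar d * cD d)) ^ ((d : ℝ) / 2)

def YM (d : ℕ) (M : ℝ) : Set (E d → ℝ) := { h | InL1Lm d h ∧ nrm d 1 h = M }

def M2 (d : ℕ) (h : E d → ℝ) : ℝ := ∫ x : E d, ‖x‖ ^ 2 * h x

def Gfun (d : ℕ) (h : E d → ℝ) : ℝ := Ffun d h + M2 d h / 2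

def ZM (d : ℕ) (M : ℝ) : Set (E d → ℝ) :=
  { h | h ∈ YM d M ∧ Integrable (fun x : E d => ‖x‖ ^ 2 * h x) volume }

def lap (d : ℕ) (f : E d → ℝ) (x : E d) : ℝ :=
  ∑ i : Fin d, fderiv ℝ (fun y => fderiv ℝ f y (EuclideanSpace.single i 1)) x (EuclideanSpace.single i 1)

/-! For `h ∈ 𝒴_M` the definition of `C_*` gives `𝒲(h) ≤ C_* M^{2/d} ‖h‖_m^m`, hence
`ℱ[h] ≥ (1/(m-1) - c_d C_* M^{2/d} / 2) ‖h‖_m^m`, and the bracket is positive exactly when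
`M < M_c`. Conversely, spreading the mass `M` uniformly over a ball of volume `V` gives
`ℱ ≤ M^m V^{1-m} / (m-1)`, which tends to `0` as `V → ∞` because `m > 1` and `𝒲 ≥ 0`. So the
infimum of `ℱ` over `𝒴_M` is `0`, and no `h` with `ℱ[h] > 0` attains it. -/

open Filter Topology

theorem tendsto_measureReal_ball_atTop {F : Type*} [NormedAddCommGroup F] [NormedSpace ℝ F]
    [MeasurableSpace F] [BorelSpace F] [FiniteDimensional ℝ F] [Nontrivial F]
    (μ : Measure F) [μ.IsAddHaarMeasure] :
    Tendsto (fun R : ℝ => μ.real (ball (0 : F) R)) atTop atTop := by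
  have hball : 0 < μ.real (ball (0 : F) 1) :=
    ENNReal.toReal_pos (measure_ball_pos μ _ one_pos).ne' measure_ball_lt_top.ne
  have hdim := (Module.finrank_pos (R := ℝ) (M := F)).ne'
  refine ((tendsto_pow_atTop hdim).atTop_mul_const hball).congr' ?_
  filter_upwards [eventually_ge_atTop 0] with R hR
  rw [measureReal_def, measureReal_def, Measure.addHaar_ball μ 0 hR, ENNReal.toReal_mul,
    ENNReal.toReal_ofReal (by positivity)]

theorem integral_indicator_const_rpow {α : Type*} [MeasurableSpace α] {μ : Measure α} {s : Set α}
    (hs : MeasurableSet s) (a : ℝ) {p : ℝ} (hp : p ≠ 0) :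
    ∫ x, s.indicator (fun _ => a) x ^ p ∂μ = μ.real s * a ^ p := by
  have hcomp : (fun x => s.indicator (fun _ => a) x ^ p) = s.indicator (fun _ => a ^ p) :=
    (indicator_comp_of_zero (g := fun t : ℝ => t ^ p) (Real.zero_rpow hp)).symm
  rw [hcomp, integral_indicator_const _ hs, smul_eq_mul]

theorem one_lt_mexp {d : ℕ} (hd : 3 ≤ d) : 1 < mexp d := by
  have hd' : (3 : ℝ) ≤ d := by exact_mod_cast hd
  rw [mexp, lt_div_iff₀ (by linarith)]
  linarith

theorem cD_pos {d : ℕ} (hd : 3 ≤ d) : 0 < cD d := by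
  have hd' : (3 : ℝ) ≤ d := by exact_mod_cast hd
  have hGamma : 0 < Real.Gamma ((d : ℝ) / 2) := Real.Gamma_pos_of_pos (by positivity)
  have hsub : (0 : ℝ) < d - 2 := by linarith
  rw [cD, sigmaD]
  positivity

theorem Wfun_nonneg {d : ℕ} {h : E d → ℝ} (hnn : 0 ≤ᵐ[volume] h) : 0 ≤ Wfun d h := by
  refine integral_nonneg_of_ae ?_
  filter_upwards [hnn] with x hx
  refine integral_nonneg_of_ae ?_
  filter_upwards [hnn] with y hy
  exact mul_nonneg (mul_nonneg hx hy) (Real.rpow_nonneg (norm_nonneg _) _)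

theorem integral_rpow_eq_nrm_rpow {d : ℕ} {p : ℝ} {h : E d → ℝ} (hp : 0 < p)
    (hmem : MemLp h (ENNReal.ofReal p) volume) (hnn : 0 ≤ᵐ[volume] h) :
    ∫ x, h x ^ p = nrm d p h ^ p := by
  have hnorm : ∫ x, h x ^ p = ∫ x, ‖h x‖ ^ p :=
    integral_congr_ae (by filter_upwards [hnn] with x hx; rw [Real.norm_of_nonneg hx])
  rw [nrm, hmem.eLpNorm_eq_integral_rpow_norm (ENNReal.ofReal_pos.2 hp).ne' ENNReal.ofReal_ne_top,
    ENNReal.toReal_ofReal hp.le, ENNReal.toReal_ofReal (by positivity),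
    Real.rpow_inv_rpow (integral_nonneg fun _ => by positivity) hp.ne', hnorm]

theorem nrm_pos {d : ℕ} {p : ℝ} {h : E d → ℝ} (hp : 0 < p)
    (hmem : MemLp h (ENNReal.ofReal p) volume) (hne : ¬ h =ᵐ[volume] 0) : 0 < nrm d p h :=
  ENNReal.toReal_pos
    (fun h0 => hne ((eLpNorm_eq_zero_iff hmem.1 (ENNReal.ofReal_pos.2 hp).ne').1 h0)) hmem.2.ne

theorem Mc_eq_zero_of_Cstar_eq_zero {d : ℕ} (hd : d ≠ 0) (hC : Cstar d = 0) : Mc d = 0 := by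
  rw [Mc, hC, mul_zero, zero_mul, div_zero,
    Real.zero_rpow (div_ne_zero (Nat.cast_ne_zero.2 hd) two_ne_zero)]

/-- `Cstar` is an `sSup` in `ℝ`, hence `0` if the ratios are unbounded; this would force `Mc = 0`. -/
theorem Wfun_div_le_Cstar {d : ℕ} (hd : d ≠ 0) (hMc : 0 < Mc d) {h : E d → ℝ}
    (hh : InL1Lm d h) (hne : ¬ h =ᵐ[volume] 0) :
    Wfun d h / (nrm d 1 h ^ (2 / (d : ℝ)) * nrm d (mexp d) h ^ mexp d) ≤ Cstar d := by
  by_cases hbdd : BddAbove {r : ℝ | ∃ h : E d → ℝ, InL1Lm d h ∧ ¬ (h =ᵐ[volume] 0) ∧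
      r = Wfun d h / (nrm d 1 h ^ (2 / (d : ℝ)) * nrm d (mexp d) h ^ mexp d)}
  · exact le_csSup hbdd ⟨h, hh, hne, rfl⟩
  · have := Mc_eq_zero_of_Cstar_eq_zero hd (Real.sSup_of_not_bddAbove hbdd)
    linarith

theorem Mc_rpow_two_div {d : ℕ} (hd : d ≠ 0) (hC : 0 ≤ (mexp d - 1) * Cstar d * cD d) :
    Mc d ^ (2 / (d : ℝ)) = 2 / ((mexp d - 1) * Cstar d * cD d) := by
  have hd' : (d : ℝ) ≠ 0 := Nat.cast_ne_zero.2 hd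
  rw [Mc, ← Real.rpow_mul (by positivity), show (d : ℝ) / 2 * (2 / d) = 1 by field_simp,
    Real.rpow_one]

theorem cD_mul_Cstar_mul_rpow_lt {d : ℕ} (hd : 3 ≤ d) {M : ℝ} (hM0 : 0 ≤ M) (hM : M < Mc d)
    (hC : 0 < Cstar d) : cD d / 2 * Cstar d * M ^ (2 / (d : ℝ)) < 1 / (mexp d - 1) := by
  have hm := sub_pos.2 (one_lt_mexp hd)
  have hc := cD_pos hd
  have hlt : M ^ (2 / (d : ℝ)) < 2 / ((mexp d - 1) * Cstar d * cD d) := by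
    rw [← Mc_rpow_two_div (by omega) (by positivity)]
    exact Real.rpow_lt_rpow hM0 hM (by positivity)
  calc cD d / 2 * Cstar d * M ^ (2 / (d : ℝ))
      < cD d / 2 * Cstar d * (2 / ((mexp d - 1) * Cstar d * cD d)) := by gcongr
    _ = 1 / (mexp d - 1) := by field_simp

theorem Ffun_pos_of_mem_YM {d : ℕ} (hd : 3 ≤ d) {M : ℝ} (hM0 : 0 < M) (hM : M < Mc d)
    {h : E d → ℝ} (hh : h ∈ YM d M) : 0 < Ffun d h := by
  obtain ⟨⟨hL1, hLm, hnn⟩, rfl⟩ := hh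
  have hm := one_lt_mexp hd
  have hne : ¬ h =ᵐ[volume] 0 := fun h0 => by
    rw [nrm, eLpNorm_congr_ae h0, eLpNorm_zero, ENNReal.toReal_zero] at hM0
    exact hM0.false
  set N := nrm d (mexp d) h ^ mexp d
  have hN : 0 < N := Real.rpow_pos_of_pos (nrm_pos (by linarith) hLm hne) _
  have hD : 0 < nrm d 1 h ^ (2 / (d : ℝ)) * N := by positivity
  have hratio := Wfun_div_le_Cstar (by omega) (hM0.trans hM) ⟨hL1, hLm, hnn⟩ hne
  have hC : 0 < Cstar d := by
    refine lt_of_le_of_ne ((div_nonneg (Wfun_nonneg hnn) hD.le).trans hratio) fun hC => ?_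
    have := Mc_eq_zero_of_Cstar_eq_zero (by omega) hC.symm
    linarith
  have hc := cD_pos hd
  rw [Ffun, integral_rpow_eq_nrm_rpow (by linarith) hLm hnn, sub_pos]
  calc cD d / 2 * Wfun d h
      ≤ cD d / 2 * (Cstar d * (nrm d 1 h ^ (2 / (d : ℝ)) * N)) := by
        gcongr
        exact (div_le_iff₀ hD).1 hratio
    _ = cD d / 2 * Cstar d * nrm d 1 h ^ (2 / (d : ℝ)) * N := by ring
    _ < 1 / (mexp d - 1) * N := by
        gcongr
        exact cD_mul_Cstar_mul_rpow_lt hd hM0.le hM hC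

theorem indicator_mem_YM {d : ℕ} {M : ℝ} (hM : 0 ≤ M) {s : Set (E d)} (hs : MeasurableSet s)
    (hs0 : 0 < volume.real s) : s.indicator (fun _ => M / volume.real s) ∈ YM d M := by
  have hfin : volume s ≠ ⊤ := (ENNReal.toReal_pos_iff.1 hs0).2.ne
  have hmem (q) : MemLp (s.indicator fun _ => M / volume.real s) q volume :=
    memLp_indicator_const q hs _ (Or.inr hfin)
  have hnn : 0 ≤ᵐ[volume] s.indicator fun _ => M / volume.real s :=
    ae_of_all _ (indicator_nonneg fun _ _ => by positivity)
  refine ⟨⟨hmem 1, hmem _, hnn⟩, ?_⟩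
  have hnrm := integral_rpow_eq_nrm_rpow one_pos (hmem _) hnn
  rw [integral_indicator_const_rpow hs _ one_ne_zero, Real.rpow_one, Real.rpow_one] at hnrm
  rw [← hnrm]
  field_simp

theorem Ffun_le_of_nonneg {d : ℕ} (hd : 3 ≤ d) {h : E d → ℝ} (hnn : 0 ≤ᵐ[volume] h) :
    Ffun d h ≤ 1 / (mexp d - 1) * ∫ x, h x ^ mexp d := by
  have := mul_nonneg (half_pos (cD_pos hd)).le (Wfun_nonneg hnn)
  rw [Ffun]
  linarith

theorem exists_mem_YM_Ffun_lt {d : ℕ} (hd : 3 ≤ d) {M : ℝ} (hM : 0 ≤ M) {ε : ℝ} (hε : 0 < ε) :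
    ∃ g ∈ YM d M, Ffun d g < ε := by
  have hm := sub_pos.2 (one_lt_mexp hd)
  have : NeZero d := ⟨by omega⟩
  have hdecay : Tendsto (fun V : ℝ => 1 / (mexp d - 1) * M ^ mexp d * V ^ (-(mexp d - 1)))
      atTop (𝓝 0) := by
    simpa using (tendsto_rpow_neg_atTop hm).const_mul (1 / (mexp d - 1) * M ^ mexp d)
  have hvol := tendsto_measureReal_ball_atTop (volume : Measure (E d))
  obtain ⟨R, hRε, hR0⟩ :=
    (((hdecay.comp hvol).eventually (gt_mem_nhds hε)).and (hvol.eventually_gt_atTop 0)).exists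
  refine ⟨_, indicator_mem_YM hM measurableSet_ball hR0, ?_⟩
  refine (Ffun_le_of_nonneg hd
    (ae_of_all _ (indicator_nonneg fun _ _ => by positivity))).trans_lt ?_
  rw [integral_indicator_const_rpow measurableSet_ball _ (by linarith)]
  convert hRε using 1
  simp only [Function.comp_apply]
  rw [Real.div_rpow hM hR0.le, Real.rpow_neg hR0.le, Real.rpow_sub hR0, Real.rpow_one]
  field_simp

/-- For `0 < M < M_c`, `ℱ` is strictly positive on `𝒴_M`; in particular the infimum
`μ_M = 0` of `ℱ` over `𝒴_M` is not attained. -/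
theorem freeEnergy_pos_subcritical (d : ℕ) (hd : 3 ≤ d) (M : ℝ) (hM0 : 0 < M)
    (hM : M < Mc d) :
    (∀ h ∈ YM d M, 0 < Ffun d h) ∧
    ¬ ∃ h ∈ YM d M, IsGLB (Ffun d '' YM d M) (Ffun d h) := by
  have hpos : ∀ h ∈ YM d M, 0 < Ffun d h := fun h hh => Ffun_pos_of_mem_YM hd hM0 hM hh
  refine ⟨hpos, ?_⟩
  rintro ⟨h, hh, hglb⟩
  obtain ⟨g, hg, hlt⟩ := exists_mem_YM_Ffun_lt hd hM0.le (hpos h hh)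
  exact (hglb.1 (mem_image_of_mem _ hg)).not_gt hlt
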